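/- Let p > 2 be a real number. Then f is bounded on the open interval (0,1): there exists a constant C such that |f(u)| ≤ C for all u ∈ (0,1). -/

import Mathlib

/-!
Put `q = p / (p - 1)`, `r = (1 - u) / (1 + u)` and `s = (1 - u ^ (p - 1)) / (1 + u ^ (p - 1))`.
Factoring `(1 + u) ^ p` and `(1 + u ^ (p - 1)) ^ q` out of numerator and denominator gives
`f p u = (1 + u) ^ p / (1 + u ^ p) * (r ^ p * (1 - s ^ q) / (s ^ q - r ^ p))`, where the first
factor lies in `[0, 2 ^ p]` and `0 < r ≤ s < 1` because `u ^ (p - 1) ≤ u`. Since `q < p`, the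
elementary bound `exp x ≥ 1 + x` gives `1 - s ^ q ≤ -q log s ≤ -q log r` and
`s ^ q - r ^ p ≥ r ^ q - r ^ p ≥ (p - q) r ^ p (-log r)`, so the second factor lies in
`[0, q / (p - q)] = [0, 1 / (p - 2)]`.
-/

/-- The function f from Lemma 1 of the paper. -/
noncomputable def f (p u : ℝ) : ℝ :=
  (1 - u ^ (2:ℝ)) ^ p / (1 + u ^ p) *
    ((1 + u ^ (p - 1)) ^ (p / (p - 1)) - (1 - u ^ (p - 1)) ^ (p / (p - 1))) /
    ((1 + u) ^ p * (1 - u ^ (p - 1)) ^ (p / (p - 1)) -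
      (1 - u) ^ p * (1 + u ^ (p - 1)) ^ (p / (p - 1)))

open Real Set

namespace Real

theorem one_sub_rpow_le_neg_mul_log {s : ℝ} (hs : 0 < s) (q : ℝ) : 1 - s ^ q ≤ -(q * log s) := by
  have := add_one_le_exp (log s * q)
  rw [← rpow_def_of_pos hs] at this
  linarith

theorem rpow_mul_neg_log_le_rpow_sub_rpow {r : ℝ} (hr : 0 < r) (p q : ℝ) :
    r ^ p * -((p - q) * log r) ≤ r ^ q - r ^ p := by
  have hsplit : r ^ q = r ^ p * r ^ (q - p) := by rw [← rpow_add hr]; ring_nf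
  have hlog := log_le_sub_one_of_pos (rpow_pos_of_pos hr (q - p))
  rw [log_rpow hr] at hlog
  rw [hsplit]
  nlinarith [rpow_pos_of_pos hr p]

theorem sub_mul_rpow_mul_one_sub_rpow_le {r s p q : ℝ} (hr : 0 < r) (hrs : r ≤ s) (hq : 0 ≤ q)
    (hqp : q ≤ p) : (p - q) * (r ^ p * (1 - s ^ q)) ≤ q * (s ^ q - r ^ p) := by
  have hrp := (rpow_pos_of_pos hr p).le
  have hpq : 0 ≤ p - q := by linarith
  have hlog : log r ≤ log s := log_le_log hr hrs
  calc (p - q) * (r ^ p * (1 - s ^ q))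
      ≤ (p - q) * (r ^ p * -(q * log s)) := by
        gcongr; exact one_sub_rpow_le_neg_mul_log (hr.trans_le hrs) q
    _ ≤ (p - q) * (r ^ p * -(q * log r)) := by gcongr
    _ = q * (r ^ p * -((p - q) * log r)) := by ring
    _ ≤ q * (r ^ q - r ^ p) := by gcongr; exact rpow_mul_neg_log_le_rpow_sub_rpow hr p q
    _ ≤ q * (s ^ q - r ^ p) := by gcongr

theorem rpow_mul_one_sub_rpow_div_mem_Icc {r s p q : ℝ} (hr : 0 < r) (hrs : r ≤ s) (hs : s < 1)
    (hq : 0 < q) (hqp : q < p) :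
    r ^ p * (1 - s ^ q) / (s ^ q - r ^ p) ∈ Icc 0 (q / (p - q)) := by
  have hgap : 0 < s ^ q - r ^ p := by
    have : r ^ p < r ^ q := rpow_lt_rpow_of_exponent_gt hr (hrs.trans_lt hs) hqp
    have : r ^ q ≤ s ^ q := by gcongr
    linarith
  have hsq : s ^ q ≤ 1 := rpow_le_one (hr.le.trans hrs) hs.le hq.le
  refine ⟨div_nonneg (mul_nonneg (rpow_pos_of_pos hr p).le (by linarith)) hgap.le, ?_⟩
  rw [div_le_div_iff₀ hgap (by linarith)]
  linarith [sub_mul_rpow_mul_one_sub_rpow_le hr hrs hq.le hqp.le]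

theorem one_add_rpow_div_one_add_rpow_mem_Icc {p u : ℝ} (hp : 0 ≤ p) (hu : u ∈ Ioo (0:ℝ) 1) :
    (1 + u) ^ p / (1 + u ^ p) ∈ Icc 0 (2 ^ p) := by
  obtain ⟨hu0, hu1⟩ := hu
  have hden : 1 ≤ 1 + u ^ p := by linarith [rpow_nonneg hu0.le p]
  have hnum : (1 + u) ^ p ≤ 2 ^ p := rpow_le_rpow (by linarith) (by linarith) hp
  refine ⟨div_nonneg (rpow_nonneg (by linarith) p) (by linarith), ?_⟩
  rw [div_le_iff₀ (by linarith)]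
  nlinarith [rpow_nonneg (by linarith : (0:ℝ) ≤ 1 + u) p]

end Real

theorem f_eq_mul_div {p u r s : ℝ} (hp : 1 ≤ p) (hu : u ∈ Ioo (0:ℝ) 1)
    (hr : r = (1 - u) / (1 + u)) (hs : s = (1 - u ^ (p - 1)) / (1 + u ^ (p - 1))) :
    f p u = (1 + u) ^ p / (1 + u ^ p) *
      (r ^ p * (1 - s ^ (p / (p - 1))) / (s ^ (p / (p - 1)) - r ^ p)) := by
  obtain ⟨hu0, hu1⟩ := hu
  rw [f]
  set q := p / (p - 1)
  set v := u ^ (p - 1)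
  have hv0 : 0 ≤ v := rpow_nonneg hu0.le _
  have hv1 : v ≤ 1 := rpow_le_one hu0.le hu1.le (by linarith)
  have hr0 : 0 ≤ r := hr ▸ div_nonneg (by linarith) (by linarith)
  have hs0 : 0 ≤ s := hs ▸ div_nonneg (by linarith) (by linarith)
  have hup : 0 < (1 + u) ^ p := rpow_pos_of_pos (by linarith) p
  have hvq : 0 < (1 + v) ^ q := rpow_pos_of_pos (by linarith) q
  have h1u : (1 - u) ^ p = r ^ p * (1 + u) ^ p := by
    rw [← mul_rpow hr0 (by linarith), hr, div_mul_cancel₀ _ (by linarith)]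
  have h1v : (1 - v) ^ q = s ^ q * (1 + v) ^ q := by
    rw [← mul_rpow hs0 (by linarith), hs, div_mul_cancel₀ _ (by linarith)]
  have hsq : (1 - u ^ (2:ℝ)) ^ p = (1 + u) ^ p * (1 - u) ^ p := by
    rw [← mul_rpow (by linarith) (by linarith), rpow_two]; ring_nf
  rw [hsq, h1u, h1v]
  field_simp

theorem stmt_11 (p : ℝ) (hp : 2 < p) :
    ∃ C : ℝ, ∀ u ∈ Set.Ioo (0:ℝ) 1, |f p u| ≤ C := by
  have hq : 0 < p / (p - 1) := div_pos (by linarith) (by linarith)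
  have hqp : p / (p - 1) < p := by rw [div_lt_iff₀ (by linarith)]; nlinarith
  refine ⟨2 ^ p * (p / (p - 1) / (p - p / (p - 1))), fun u hu => ?_⟩
  obtain ⟨hu0, hu1⟩ := hu
  have hv0 : 0 < u ^ (p - 1) := rpow_pos_of_pos hu0 (p - 1)
  have hr : 0 < (1 - u) / (1 + u) := div_pos (by linarith) (by linarith)
  have hrs : (1 - u) / (1 + u) ≤ (1 - u ^ (p - 1)) / (1 + u ^ (p - 1)) := by
    have : u ^ (p - 1) ≤ u := rpow_le_self_of_le_one hu0.le hu1.le (by linarith)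
    rw [div_le_div_iff₀ (by linarith) (by linarith)]
    nlinarith
  have hs : (1 - u ^ (p - 1)) / (1 + u ^ (p - 1)) < 1 := by
    rw [div_lt_one (by linarith)]; linarith
  obtain ⟨hA0, hA⟩ := one_add_rpow_div_one_add_rpow_mem_Icc (p := p) (by linarith) ⟨hu0, hu1⟩
  obtain ⟨hB0, hB⟩ := rpow_mul_one_sub_rpow_div_mem_Icc hr hrs hs hq hqp
  rw [f_eq_mul_div (by linarith) ⟨hu0, hu1⟩ rfl rfl, abs_of_nonneg (mul_nonneg hA0 hB0)]
  exact mul_le_mul hA hB hB0 (by positivity)
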